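/- arXiv:0902.4141 — 2 statements merged into one kernel-verified Lean document; each statement's English description precedes it below -/
import Mathlib

section
/- For a density matrix ρ, Hermitian X, Y, and α ∈ [0,1], the quantities W_{ρ,α}(X) = √(K_{ρ,α}(X) L_{ρ,α}(X)) satisfy the uncertainty relation W_{ρ,α}(X) W_{ρ,α}(Y) ≥ (1/4)|Tr[((ρ^α+ρ^{1−α})/2)² [X,Y]]|². -/
open Matrix ComplexOrder

/-- The real power of a positive semidefinite matrix, defined via the
continuous functional calculus (spectral decomposition). -/
noncomputable def mpow {n : Type*} [Fintype n] [DecidableEq n]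
    (ρ : Matrix n n ℂ) (hρ : ρ.PosSemidef) (α : ℝ) : Matrix n n ℂ :=
  hρ.1.cfc (fun x : ℝ => x ^ α)

/-!
Put `A = (ρ^α + ρ^{1-α})/2`, `P_Z = i[A, Z₀]` and `Q_Z = {A, Z₀}`, so that `K(Z) = Tr(P_Z²)/2`
and `L(Z) = Tr(Q_Z²)/2`. Centring does not change commutators, and cyclicity of the trace gives
`Tr(P_X Q_Y) = i Tr(A²[X, Y]) = -Tr(P_Y Q_X)`. As `P_Z`, `Q_Z` are Hermitian, Cauchy–Schwarz for
the Hilbert–Schmidt inner product yields `|Tr(A²[X, Y])|²/4 ≤ K(X) L(Y)` and `≤ K(Y) L(X)`;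
multiplying the two bounds and taking square roots gives the theorem.
-/

lemma mpow_isHermitian {n : Type*} [Fintype n] [DecidableEq n]
    (ρ : Matrix n n ℂ) (hρ : ρ.PosSemidef) (α : ℝ) : (mpow ρ hρ α).IsHermitian := by
  rw [mpow, ← hρ.1.cfc_eq]
  exact cfc_predicate (R := ℝ) (fun x : ℝ => x ^ α) ρ

lemma Real.le_sqrt_mul_mul_sqrt_mul {t a b c d : ℝ} (ht : 0 ≤ t) (ha : 0 ≤ a) (hb : 0 ≤ b)
    (hd : 0 ≤ d) (had : t ≤ a * d) (hcb : t ≤ c * b) : t ≤ √(a * b) * √(c * d) := by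
  rw [← Real.sqrt_mul (mul_nonneg ha hb), ← Real.sqrt_mul_self ht]
  apply Real.sqrt_le_sqrt
  calc t * t ≤ (a * d) * (c * b) := mul_le_mul had hcb ht (mul_nonneg ha hd)
    _ = a * b * (c * d) := by ring

namespace Matrix

variable {n : Type*} [Fintype n]

lemma IsHermitian.I_smul_commutator {A Z : Matrix n n ℂ} (hA : A.IsHermitian)
    (hZ : Z.IsHermitian) : (Complex.I • (A * Z - Z * A)).IsHermitian := by
  rw [IsHermitian, conjTranspose_smul, conjTranspose_sub, conjTranspose_mul, conjTranspose_mul,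
    hA.eq, hZ.eq, Complex.star_def, Complex.conj_I, neg_smul, ← smul_neg, neg_sub]

lemma IsHermitian.anticommutator {A Z : Matrix n n ℂ} (hA : A.IsHermitian)
    (hZ : Z.IsHermitian) : (A * Z + Z * A).IsHermitian := by
  rw [IsHermitian, conjTranspose_add, conjTranspose_mul, conjTranspose_mul, hA.eq, hZ.eq,
    add_comm]

variable [DecidableEq n]

lemma norm_trace_mul_conjTranspose_sq_le (P Q : Matrix n n ℂ) :
    ‖(P * Qᴴ).trace‖ ^ 2 ≤ (P * Pᴴ).trace.re * (Q * Qᴴ).trace.re := by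
  let _ := (1 : Matrix n n ℂ).toMatrixSeminormedAddCommGroup PosSemidef.one
  let _ := (1 : Matrix n n ℂ).toMatrixInnerProductSpace PosSemidef.one
  have h := inner_mul_inner_self_le (𝕜 := ℂ) Q P
  change ‖(P * 1 * Qᴴ).trace‖ * ‖(Q * 1 * Pᴴ).trace‖
    ≤ (Q * 1 * Qᴴ).trace.re * (P * 1 * Pᴴ).trace.re at h
  have hc : (Q * Pᴴ).trace = star (P * Qᴴ).trace := by
    rw [← trace_conjTranspose, conjTranspose_mul, conjTranspose_conjTranspose]
  simp only [Matrix.mul_one] at h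
  rw [hc, norm_star, mul_comm (Q * Qᴴ).trace.re] at h
  rwa [sq]

lemma IsHermitian.norm_trace_mul_sq_le {P Q : Matrix n n ℂ} (hP : P.IsHermitian)
    (hQ : Q.IsHermitian) : ‖(P * Q).trace‖ ^ 2 ≤ (P ^ 2).trace.re * (Q ^ 2).trace.re := by
  simpa only [sq, hP.eq, hQ.eq] using norm_trace_mul_conjTranspose_sq_le P Q

lemma IsHermitian.re_trace_sq_nonneg {P : Matrix n n ℂ} (hP : P.IsHermitian) :
    0 ≤ (P ^ 2).trace.re := by
  rw [sq]
  nth_rewrite 1 [← hP.eq]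
  exact (Complex.nonneg_iff.mp (posSemidef_conjTranspose_mul_self P).trace_nonneg).1

lemma IsHermitian.sub_trace_mul_smul_one {ρ Z : Matrix n n ℂ}
    (hρ : ρ.IsHermitian) (hZ : Z.IsHermitian) : (Z - (ρ * Z).trace • 1).IsHermitian := by
  have hreal : star (ρ * Z).trace = (ρ * Z).trace := by
    rw [← trace_conjTranspose, conjTranspose_mul, hρ.eq, hZ.eq, trace_mul_comm]
  rw [IsHermitian, conjTranspose_sub, hZ.eq, conjTranspose_smul, hreal, conjTranspose_one]

lemma commutator_sub_smul_one (X Y : Matrix n n ℂ) (a b : ℂ) :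
    (X - a • 1) * (Y - b • 1) - (Y - b • 1) * (X - a • 1) = X * Y - Y * X := by
  simp only [sub_mul, mul_sub, Matrix.smul_mul, Matrix.mul_smul, Matrix.one_mul, Matrix.mul_one, smul_smul,
    mul_comm a b]
  abel

lemma trace_commutator_mul_anticommutator (A X Y : Matrix n n ℂ) :
    ((A * X - X * A) * (A * Y + Y * A)).trace = (A ^ 2 * (X * Y - Y * X)).trace := by
  have h : (A * X - X * A) * (A * Y + Y * A)
      = A ^ 2 * (X * Y - Y * X)
        + (A * (X * A * Y) - (X * A * Y) * A)
        + ((A * X * Y) * A - A * (A * X * Y))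
        + ((A * A * Y) * X - X * (A * A * Y)) := by
    noncomm_ring
  rw [h]
  simp only [trace_add, trace_sub, trace_mul_comm A (X * A * Y),
    trace_mul_comm (A * X * Y) A, trace_mul_comm (A * A * Y) X, sub_self, add_zero]

lemma IsHermitian.norm_trace_sq_mul_commutator_sq_le {A X Y : Matrix n n ℂ}
    (hA : A.IsHermitian) (hX : X.IsHermitian) (hY : Y.IsHermitian) :
    ‖(A ^ 2 * (X * Y - Y * X)).trace‖ ^ 2
      ≤ ((Complex.I • (A * X - X * A)) ^ 2).trace.re * ((A * Y + Y * A) ^ 2).trace.re := by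
  have h := (hA.I_smul_commutator hX).norm_trace_mul_sq_le (hA.anticommutator hY)
  rwa [smul_mul, trace_smul, trace_commutator_mul_anticommutator, smul_eq_mul, norm_mul,
    Complex.norm_I, one_mul] at h

end Matrix

theorem stmt6_general {n : Type*} [Fintype n] [DecidableEq n]
    (ρ : Matrix n n ℂ) (hρ : ρ.PosSemidef)
    (X Y : Matrix n n ℂ) (hX : X.IsHermitian) (hY : Y.IsHermitian)
    (α : ℝ) :
    let A := (1/2 : ℂ) • (mpow ρ hρ α + mpow ρ hρ (1-α))
    let K : Matrix n n ℂ → ℝ := fun Z =>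
      (((1/2 : ℂ) * ((Complex.I • (A * (Z - (ρ * Z).trace • 1) -
          (Z - (ρ * Z).trace • 1) * A)) ^ 2).trace)).re
    let L : Matrix n n ℂ → ℝ := fun Z =>
      (((1/2 : ℂ) * ((A * (Z - (ρ * Z).trace • 1) +
          (Z - (ρ * Z).trace • 1) * A) ^ 2).trace)).re
    let W : Matrix n n ℂ → ℝ := fun Z => Real.sqrt (K Z * L Z)
    W X * W Y ≥ (1/4) * ‖(A ^ 2 * (X * Y - Y * X)).trace‖ ^ 2 := by
  intro A K L W
  have hA : A.IsHermitian :=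
    ((mpow_isHermitian ρ hρ α).add (mpow_isHermitian ρ hρ (1 - α))).smul (by simp [IsSelfAdjoint])
  have hX₀ := hρ.1.sub_trace_mul_smul_one hX
  have hY₀ := hρ.1.sub_trace_mul_smul_one hY
  have hXY := hA.norm_trace_sq_mul_commutator_sq_le hX₀ hY₀
  have hYX := hA.norm_trace_sq_mul_commutator_sq_le hY₀ hX₀
  rw [commutator_sub_smul_one] at hXY hYX
  rw [← neg_sub, mul_neg, trace_neg, norm_neg] at hYX
  have half_re (z : ℂ) : ((1 / 2 : ℂ) * z).re = z.re / 2 := by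
    rw [one_div_mul_eq_div, Complex.div_ofNat_re]
  simp only [W, K, L, half_re]
  exact Real.le_sqrt_mul_mul_sqrt_mul (by positivity)
    (by linarith [(hA.I_smul_commutator hX₀).re_trace_sq_nonneg])
    (by linarith [(hA.anticommutator hX₀).re_trace_sq_nonneg])
    (by linarith [(hA.anticommutator hY₀).re_trace_sq_nonneg])
    (by linarith) (by linarith)

theorem stmt6 {n : Type*} [Fintype n] [DecidableEq n]
    (ρ : Matrix n n ℂ) (hρ : ρ.PosSemidef) (htr : ρ.trace = 1)
    (X Y : Matrix n n ℂ) (hX : X.IsHermitian) (hY : Y.IsHermitian)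
    (α : ℝ) (hα : α ∈ Set.Icc (0:ℝ) 1) :
    let A := (1/2 : ℂ) • (mpow ρ hρ α + mpow ρ hρ (1-α))
    let K : Matrix n n ℂ → ℝ := fun Z =>
      (((1/2 : ℂ) * ((Complex.I • (A * (Z - (ρ * Z).trace • 1) -
          (Z - (ρ * Z).trace • 1) * A)) ^ 2).trace)).re
    let L : Matrix n n ℂ → ℝ := fun Z =>
      (((1/2 : ℂ) * ((A * (Z - (ρ * Z).trace • 1) +
          (Z - (ρ * Z).trace • 1) * A) ^ 2).trace)).re
    let W : Matrix n n ℂ → ℝ := fun Z => Real.sqrt (K Z * L Z)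
    W X * W Y ≥ (1/4) * ‖(A ^ 2 * (X * Y - Y * X)).trace‖ ^ 2 :=
  stmt6_general ρ hρ X Y hX hY α
end

section
/- For a density matrix ρ and Hermitian H, I_{ρ,α}(H) ≥ 0 for all α ∈ [0,1], i.e., Tr[ρ^α H ρ^{1−α} H] ≤ Tr[ρ H²]. -/
/-!
In an eigenbasis `U` of `ρ`, with eigenvalues `λᵢ ≥ 0` and `M = Uᴴ H U`, both traces are double
sums weighted by `|Mᵢⱼ|²`: the left side is `∑ λᵢ^α λⱼ^(1-α) |Mᵢⱼ|²`, and the right side is its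
case `α = 1`, namely `∑ λᵢ |Mᵢⱼ|²`. Weighted AM-GM bounds `λᵢ^α λⱼ^(1-α)` by `αλᵢ + (1-α)λⱼ`, and
since `|Mᵢⱼ| = |Mⱼᵢ|` the resulting sum equals `∑ λᵢ |Mᵢⱼ|²` again.
-/

open Matrix ComplexOrder

namespace Matrix

variable {n : Type*} [Fintype n] [DecidableEq n]

theorem trace_diagonal_mul_diagonal_mul {R : Type*} [CommSemiring R] (a b : n → R)
    (M N : Matrix n n R) :
    (diagonal a * M * diagonal b * N).trace = ∑ i, ∑ j, a i * b j * (M i j * N j i) := by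
  simp only [trace, diag, mul_apply (N := N), mul_diagonal, diagonal_mul]
  exact Finset.sum_congr rfl fun i _ => Finset.sum_congr rfl fun j _ => by ring

theorem trace_unitary_conj_mul_unitary_conj_mul {R : Type*} [CommRing R] [StarRing R]
    {U : Matrix n n R} (hU : U ∈ unitary (Matrix n n R)) (A B H : Matrix n n R) :
    (U * A * star U * H * (U * B * star U) * H).trace
      = (A * (star U * H * U) * B * (star U * H * U)).trace := by
  have hconj : U * A * star U * H * (U * B * star U) * H
      = U * (A * (star U * H * U) * B * (star U * H * U)) * star U := by
    simp only [← Matrix.mul_assoc]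
    rw [Matrix.mul_assoc _ U (star U), Unitary.mul_star_self_of_mem hU, Matrix.mul_one]
  rw [hconj, trace_mul_cycle, ← Matrix.mul_assoc, Unitary.star_mul_self_of_mem hU, Matrix.one_mul]

variable {𝕜 : Type*} [RCLike 𝕜]

theorem IsHermitian.trace_cfc_mul_cfc_mul {A H : Matrix n n 𝕜} (hA : A.IsHermitian)
    (hH : H.IsHermitian) (f g : ℝ → ℝ) :
    (hA.cfc f * H * hA.cfc g * H).trace
      = ((∑ i, ∑ j, f (hA.eigenvalues i) * g (hA.eigenvalues j) *
          ‖((hA.eigenvectorUnitary : Matrix n n 𝕜)ᴴ * H * hA.eigenvectorUnitary) i j‖ ^ 2 : ℝ)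
        : 𝕜) := by
  have hM := isHermitian_conjTranspose_mul_mul (hA.eigenvectorUnitary : Matrix n n 𝕜) hH
  simp only [IsHermitian.cfc, Unitary.conjStarAlgAut_apply]
  rw [trace_unitary_conj_mul_unitary_conj_mul hA.eigenvectorUnitary.2,
    trace_diagonal_mul_diagonal_mul, star_eq_conjTranspose]
  push_cast
  refine Finset.sum_congr rfl fun i _ => Finset.sum_congr rfl fun j _ => ?_
  rw [← hM.apply j i, RCLike.star_def, RCLike.mul_conj]
  rfl

end Matrix

section mpow

variable {n : Type*} [Fintype n] [DecidableEq n] {ρ : Matrix n n ℂ}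

theorem mpow_eq_cfc (hρ : ρ.PosSemidef) (α : ℝ) : mpow ρ hρ α = cfc (fun x : ℝ => x ^ α) ρ :=
  (hρ.1.cfc_eq _).symm

theorem mpow_one (hρ : ρ.PosSemidef) : mpow ρ hρ 1 = ρ := by
  simp only [mpow_eq_cfc, Real.rpow_one]
  exact cfc_id' ℝ ρ hρ.1.isSelfAdjoint

theorem mpow_zero (hρ : ρ.PosSemidef) : mpow ρ hρ 0 = 1 := by
  simp only [mpow_eq_cfc, Real.rpow_zero]
  exact cfc_const_one ℝ ρ hρ.1.isSelfAdjoint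

end mpow

theorem sum_sum_rpow_mul_rpow_mul_le {ι : Type*} [Fintype ι] {x : ι → ℝ} (hx : ∀ i, 0 ≤ x i)
    {w : ι → ι → ℝ} (hw : ∀ i j, 0 ≤ w i j) (hw_symm : ∀ i j, w i j = w j i) {α : ℝ}
    (hα₀ : 0 ≤ α) (hα₁ : α ≤ 1) :
    ∑ i, ∑ j, x i ^ α * x j ^ (1 - α) * w i j ≤ ∑ i, ∑ j, x i * w i j := by
  have hswap : ∑ i, ∑ j, x j * w i j = ∑ i, ∑ j, x i * w i j := by
    rw [Finset.sum_comm]; simp only [hw_symm]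
  calc ∑ i, ∑ j, x i ^ α * x j ^ (1 - α) * w i j
      ≤ ∑ i, ∑ j, (α * x i + (1 - α) * x j) * w i j := by
        gcongr with i _ j _
        · exact hw i j
        · exact Real.geom_mean_le_arith_mean2_weighted hα₀ (by linarith) (hx i) (hx j) (by ring)
    _ = α * ∑ i, ∑ j, x i * w i j + (1 - α) * ∑ i, ∑ j, x j * w i j := by
        simp only [Finset.mul_sum, ← Finset.sum_add_distrib, add_mul, mul_assoc]
    _ = ∑ i, ∑ j, x i * w i j := by rw [hswap]; ring

theorem stmt14_general {n : Type*} [Fintype n] [DecidableEq n]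
    (ρ : Matrix n n ℂ) (hρ : ρ.PosSemidef)
    (H : Matrix n n ℂ) (hH : H.IsHermitian)
    (α : ℝ) (hα : α ∈ Set.Icc (0:ℝ) 1) :
    (mpow ρ hρ α * H * mpow ρ hρ (1-α) * H).trace ≤ (ρ * H ^ 2).trace := by
  have hρH : ρ * H ^ 2 = mpow ρ hρ 1 * H * mpow ρ hρ (1 - 1) * H := by
    rw [sub_self, mpow_one, mpow_zero, Matrix.mul_one, sq, Matrix.mul_assoc]
  have hM := isHermitian_conjTranspose_mul_mul (hρ.1.eigenvectorUnitary : Matrix n n ℂ) hH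
  rw [hρH]
  unfold mpow
  rw [hρ.1.trace_cfc_mul_cfc_mul hH, hρ.1.trace_cfc_mul_cfc_mul hH, RCLike.ofReal_le_ofReal]
  simpa only [Real.rpow_one, sub_self, Real.rpow_zero, mul_one] using
    sum_sum_rpow_mul_rpow_mul_le hρ.eigenvalues_nonneg (fun _ _ => sq_nonneg _)
      (fun i j => by rw [← hM.apply i j, norm_star]) hα.1 hα.2

theorem stmt14 {n : Type*} [Fintype n] [DecidableEq n]
    (ρ : Matrix n n ℂ) (hρ : ρ.PosSemidef) (htr : ρ.trace = 1)
    (H : Matrix n n ℂ) (hH : H.IsHermitian)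
    (α : ℝ) (hα : α ∈ Set.Icc (0:ℝ) 1) :
    (mpow ρ hρ α * H * mpow ρ hρ (1-α) * H).trace ≤ (ρ * H ^ 2).trace :=
  stmt14_general ρ hρ H hH α hα
end
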